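/- arXiv:1103.3673 — 6 statements merged into one kernel-verified Lean document; each statement's English description precedes it below -/
import Mathlib

section
/- Fix an integer N ≥ 1 and a threshold γ > 0. Define P_out^MMRS(γ̄) = 1 − [1 − (1 − exp(−γ/γ̄))^N]^2 for γ̄ > 0. Then lim_{γ̄ → ∞} P_out^MMRS(γ̄) / (γ/γ̄)^N = 2; that is, at high SNR the MMRS outage probability behaves as (2^{1/N}·γ/γ̄)^N, so MMRS has diversity gain N and coding gain 2^{−1/N}. -/
open Filter Real

/-- High-SNR asymptotics of the MMRS outage probability in i.i.d. Rayleigh fading: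
`(1 - (1 - (1 - exp(-γ/γ̄))^N)^2) / (γ/γ̄)^N → 2` as `γ̄ → ∞`, i.e. the MMRS outage
probability behaves as `(2^{1/N} γ/γ̄)^N` (diversity gain `N`, coding gain `2^{-1/N}`). -/
theorem mmrs_outage_high_snr (N : ℕ) (hN : 1 ≤ N) (γ : ℝ) (hγ : 0 < γ) :
    Tendsto (fun γbar : ℝ =>
        (1 - (1 - (1 - Real.exp (-(γ / γbar))) ^ N) ^ 2) / (γ / γbar) ^ N)
      atTop (nhds 2) := by
  -- the auxiliary function of t = γ/γ̄
  set g : ℝ → ℝ := fun t => ((1 - Real.exp (-t)) / t) ^ N * (2 - (1 - Real.exp (-t)) ^ N)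
    with hg
  -- g → 2 as t → 0 (t ≠ 0)
  have hderiv : HasDerivAt (fun t : ℝ => 1 - Real.exp (-t)) 1 0 := by
    have h := ((hasDerivAt_neg (0 : ℝ)).exp).const_sub 1
    simpa using h
  have hslope : Tendsto (fun t : ℝ => (1 - Real.exp (-t)) / t) (nhdsWithin 0 {(0:ℝ)}ᶜ)
      (nhds 1) := by
    have := hasDerivAt_iff_tendsto_slope.mp hderiv
    have heq : (slope (fun t : ℝ => 1 - Real.exp (-t)) 0) =
        fun t : ℝ => (1 - Real.exp (-t)) / t := by
      funext t
      simp [slope_def_field, div_eq_inv_mul]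
    rwa [heq] at this
  have hsecond : Tendsto (fun t : ℝ => 2 - (1 - Real.exp (-t)) ^ N)
      (nhdsWithin 0 {(0:ℝ)}ᶜ) (nhds 2) := by
    have hc : Tendsto (fun t : ℝ => 2 - (1 - Real.exp (-t)) ^ N) (nhds 0)
        (nhds (2 - (1 - Real.exp (-(0:ℝ))) ^ N)) := by
      apply Continuous.tendsto
      continuity
    have : (2 - (1 - Real.exp (-(0:ℝ))) ^ N) = 2 := by
      simp [zero_pow (by omega : N ≠ 0)]
    rw [this] at hc
    exact hc.mono_left nhdsWithin_le_nhds
  have hgtend : Tendsto g (nhdsWithin 0 {(0:ℝ)}ᶜ) (nhds 2) := by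
    have := (hslope.pow N).mul hsecond
    simpa using this
  -- γ/γ̄ → 0 within the punctured neighborhood
  have htto : Tendsto (fun γbar : ℝ => γ / γbar) atTop (nhdsWithin 0 {(0:ℝ)}ᶜ) := by
    apply tendsto_nhdsWithin_of_tendsto_nhds_of_eventually_within
    · exact Tendsto.div_atTop tendsto_const_nhds tendsto_id
    · filter_upwards [eventually_gt_atTop (0:ℝ)] with x hx
      exact (div_pos hγ hx).ne'
  have hcomp := hgtend.comp htto
  apply hcomp.congr'
  filter_upwards [eventually_gt_atTop (0:ℝ)] with x hx
  have ht : γ / x ≠ 0 := (div_pos hγ hx).ne'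
  simp only [Function.comp, hg]
  rw [div_pow]
  set u := (1 - Real.exp (-(γ / x))) ^ N
  have htn : (γ / x) ^ N ≠ 0 := pow_ne_zero _ ht
  field_simp
  ring
end

section
/- For every integer N ≥ 1 and every real x > 0, 1 − [1 − (1 − exp(−x))^N]^2 ≤ (1 − exp(−2x))^N; that is, the outage probability of max-max relay selection is at most that of best relay selection in i.i.d. fading. Moreover, the inequality is strict when N ≥ 2. -/
/-- The MMRS outage probability is at most the BRS outage probability in i.i.d. fading:
for `N ≥ 1` and `x > 0`, `1 - (1 - (1 - exp(-x))^N)^2 ≤ (1 - exp(-2x))^N`,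
with strict inequality when `N ≥ 2`. -/
theorem mmrs_outage_le_brs_outage (N : ℕ) (hN : 1 ≤ N) (x : ℝ) (hx : 0 < x) :
    1 - (1 - (1 - Real.exp (-x)) ^ N) ^ 2 ≤ (1 - Real.exp (-(2 * x))) ^ N ∧
      (2 ≤ N →
        1 - (1 - (1 - Real.exp (-x)) ^ N) ^ 2 < (1 - Real.exp (-(2 * x))) ^ N) := by
  set e := Real.exp (-x) with he
  have he0 : 0 < e := Real.exp_pos _
  have he1 : e < 1 := by
    rw [he]
    have : -x < 0 := by linarith
    calc Real.exp (-x) < Real.exp 0 := Real.exp_lt_exp.mpr this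
      _ = 1 := Real.exp_zero
  have h2x : Real.exp (-(2 * x)) = e ^ 2 := by
    rw [he, ← Real.exp_nat_mul]
    ring_nf
  rw [h2x]
  have hfac : (1 : ℝ) - e ^ 2 = (1 - e) * (1 + e) := by ring
  rw [hfac, mul_pow]
  have ha0 : 0 < 1 - e := by linarith
  have haN : 0 < (1 - e) ^ N := pow_pos ha0 N
  have haN1 : (1 - e) ^ N ≤ 1 := pow_le_one₀ (by linarith) (by linarith)
  -- Bernoulli inequalities
  have hb1 : 1 + (N : ℝ) * e ≤ (1 + e) ^ N := one_add_mul_le_pow (by linarith) N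
  have hb2 : 1 + (N : ℝ) * (-e) ≤ (1 + (-e)) ^ N := one_add_mul_le_pow (by linarith) N
  have hb2' : 1 - (N : ℝ) * e ≤ (1 - e) ^ N := by
    have : (1 : ℝ) + (-e) = 1 - e := by ring
    rw [this] at hb2; linarith
  have hkey : 2 ≤ (1 - e) ^ N + (1 + e) ^ N := by linarith
  constructor
  · nlinarith [mul_le_mul_of_nonneg_left (by linarith : 2 - (1 - e) ^ N ≤ (1 + e) ^ N) haN.le]
  · intro hN2
    obtain ⟨m, rfl⟩ : ∃ m, N = m + 2 := ⟨N - 2, by omega⟩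
    have hbm : 1 + (m : ℝ) * e ≤ (1 + e) ^ m := one_add_mul_le_pow (by linarith) m
    have hsplit : (1 + e) ^ (m + 2) = (1 + e) ^ 2 * (1 + e) ^ m := by
      rw [pow_add]; ring
    have hm2 : 1 - ((m : ℝ) + 2) * e ≤ (1 - e) ^ (m + 2) := by
      have := hb2'
      push_cast at this ⊢
      linarith
    have hstrict : 2 < (1 - e) ^ (m + 2) + (1 + e) ^ (m + 2) := by
      rw [hsplit]
      have h1 : (1 + e) ^ 2 * (1 + (m : ℝ) * e) ≤ (1 + e) ^ 2 * (1 + e) ^ m :=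
        mul_le_mul_of_nonneg_left hbm (by positivity)
      nlinarith [sq_nonneg e, mul_nonneg (mul_nonneg (Nat.cast_nonneg m : (0:ℝ) ≤ m) he0.le) (sq_nonneg e)]
    nlinarith [mul_lt_mul_of_pos_left (by linarith : 2 - (1 - e) ^ (m + 2) < (1 + e) ^ (m + 2)) haN]
end

section
/- Fix an integer N ≥ 1, a threshold γ > 0, and p ∈ [0,1]. Define, for γ̄ > 0, P_out^HRS(γ̄) = p·(1 − [1 − (1 − exp(−γ/γ̄))^N]^2) + (1 − p)·(1 − exp(−2γ/γ̄))^N. Then lim_{γ̄ → ∞} P_out^HRS(γ̄) / (γ/γ̄)^N = 2p + 2^N(1 − p); that is, at high SNR P_out^HRS ≈ ((2·P_MMRS + 2^N·P_BRS)^{1/N}·γ/γ̄)^N with P_MMRS = p and P_BRS = 1 − p, so HRS has diversity gain N and coding gain (2P_MMRS + 2^N P_BRS)^{−1/N}. -/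
open Filter Real

/-- High-SNR asymptotics of the HRS outage probability: with
`P_out^HRS(γ̄) = p·P_out^MMRS(γ̄) + (1-p)·P_out^BRS(γ̄)`,
`P_out^HRS(γ̄) / (γ/γ̄)^N → 2p + 2^N (1-p)` as `γ̄ → ∞`, i.e. HRS has diversity gain `N`
and coding gain `(2 P_MMRS + 2^N P_BRS)^{-1/N}` with `P_MMRS = p`, `P_BRS = 1 - p`. -/
theorem hrs_outage_high_snr (N : ℕ) (hN : 1 ≤ N) (γ : ℝ) (hγ : 0 < γ)
    (p : ℝ) (hp0 : 0 ≤ p) (hp1 : p ≤ 1) :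
    Tendsto (fun γbar : ℝ =>
        (p * (1 - (1 - (1 - Real.exp (-(γ / γbar))) ^ N) ^ 2)
          + (1 - p) * (1 - Real.exp (-(2 * γ / γbar))) ^ N) / (γ / γbar) ^ N)
      atTop (nhds (2 * p + 2 ^ N * (1 - p))) := by
  have hslope : Tendsto (fun x : ℝ => (1 - Real.exp (-x)) / x)
      (nhdsWithin 0 (Set.Ioi 0)) (nhds 1) := by
    have h := Real.hasDerivAt_exp 0
    rw [hasDerivAt_iff_tendsto_slope] at h
    have hneg : Tendsto (fun x : ℝ => -x) (nhdsWithin 0 (Set.Ioi 0))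
        (nhdsWithin 0 {(0:ℝ)}ᶜ) := by
      rw [tendsto_nhdsWithin_iff]
      constructor
      · have h0 : Tendsto (fun x : ℝ => -x) (nhds 0) (nhds 0) := by
          simpa using continuous_neg.tendsto (0:ℝ)
        exact h0.mono_left nhdsWithin_le_nhds
      · filter_upwards [self_mem_nhdsWithin] with x hx
        simp only [Set.mem_Ioi] at hx
        simp only [Set.mem_compl_iff, Set.mem_singleton_iff, neg_eq_zero]
        exact ne_of_gt hx
    have h2 := h.comp hneg
    simp only [Real.exp_zero] at h2
    refine h2.congr' ?_
    filter_upwards [self_mem_nhdsWithin] with x hx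
    have hx0 : x ≠ 0 := ne_of_gt hx
    simp only [Function.comp, slope_def_field, Real.exp_zero]
    field_simp
    rw [sub_zero, mul_comm x, mul_div_assoc, div_neg, div_self hx0]
    ring
  -- x ↦ 2x maps 𝓝[>]0 to itself
  have hdouble : Tendsto (fun x : ℝ => 2 * x) (nhdsWithin 0 (Set.Ioi 0))
      (nhdsWithin 0 (Set.Ioi 0)) := by
    rw [tendsto_nhdsWithin_iff]
    constructor
    · have : Tendsto (fun x : ℝ => 2 * x) (nhds 0) (nhds 0) := by
        simpa using (continuous_mul_left (2:ℝ)).tendsto (0:ℝ)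
      exact this.mono_left nhdsWithin_le_nhds
    · filter_upwards [self_mem_nhdsWithin] with x hx
      simp only [Set.mem_Ioi] at hx ⊢; linarith
  have hB : Tendsto (fun x : ℝ => (1 - Real.exp (-(2 * x))) / x)
      (nhdsWithin 0 (Set.Ioi 0)) (nhds 2) := by
    have := (hslope.comp hdouble).const_mul 2
    refine (this.congr' ?_).mono_right (by norm_num)
    filter_upwards [self_mem_nhdsWithin] with x hx
    have hx0 : x ≠ 0 := ne_of_gt hx
    simp only [Function.comp]
    field_simp
  have hC : Tendsto (fun x : ℝ => (1 - Real.exp (-x)) ^ N)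
      (nhdsWithin 0 (Set.Ioi 0)) (nhds 0) := by
    have : Tendsto (fun x : ℝ => (1 - Real.exp (-x)) ^ N) (nhds 0)
        (nhds ((1 - Real.exp (-0)) ^ N)) := by
      exact (Continuous.pow (by continuity) N).tendsto 0
    simp only [neg_zero, Real.exp_zero, sub_self, zero_pow (by omega : N ≠ 0)] at this
    exact this.mono_left nhdsWithin_le_nhds
  -- main limit in x
  have hg : Tendsto (fun x : ℝ =>
      (p * (1 - (1 - (1 - Real.exp (-x)) ^ N) ^ 2)
        + (1 - p) * (1 - Real.exp (-(2 * x))) ^ N) / x ^ N)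
      (nhdsWithin 0 (Set.Ioi 0)) (nhds (2 * p + 2 ^ N * (1 - p))) := by
    have key : Tendsto (fun x : ℝ =>
        p * ((1 - Real.exp (-x)) / x) ^ N * (2 - (1 - Real.exp (-x)) ^ N)
          + (1 - p) * ((1 - Real.exp (-(2 * x))) / x) ^ N)
        (nhdsWithin 0 (Set.Ioi 0))
        (nhds (p * 1 ^ N * (2 - 0) + (1 - p) * 2 ^ N)) := by
      exact (((hslope.pow N).const_mul p).mul (tendsto_const_nhds.sub hC)).add
        ((hB.pow N).const_mul (1 - p))
    have : (p * 1 ^ N * (2 - 0) + (1 - p) * 2 ^ N) = 2 * p + 2 ^ N * (1 - p) := by ring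
    rw [this] at key
    refine key.congr' ?_
    filter_upwards [self_mem_nhdsWithin] with x hx
    have hx0 : x ≠ 0 := ne_of_gt hx
    have hxN : x ^ N ≠ 0 := pow_ne_zero _ hx0
    rw [div_pow, div_pow]
    field_simp
    ring
  -- compose with γbar ↦ γ/γbar
  have hcomp : Tendsto (fun γbar : ℝ => γ / γbar) atTop (nhdsWithin 0 (Set.Ioi 0)) := by
    rw [tendsto_nhdsWithin_iff]
    constructor
    · simpa using tendsto_const_nhds.div_atTop (tendsto_id (α := ℝ))
    · filter_upwards [eventually_gt_atTop 0] with x hx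
      exact Set.mem_Ioi.2 (div_pos hγ hx)
  have := hg.comp hcomp
  refine this.congr (fun γbar => ?_)
  simp only [Function.comp]
  rw [mul_div_assoc]
end

section
/- For every integer N ≥ 1, every real x > 0, and every p ∈ [0,1], writing M = 1 − [1 − (1 − exp(−x))^N]^2 and B = (1 − exp(−2x))^N, the hybrid outage probability H = p·M + (1 − p)·B satisfies M ≤ H ≤ B; that is, the outage probability of HRS always lies between those of MMRS and BRS. -/
/-- The HRS outage probability lies between those of MMRS and BRS: for `N ≥ 1`, `x > 0`
and `p ∈ [0,1]`, with `M = 1 - (1 - (1 - exp(-x))^N)^2` and `B = (1 - exp(-2x))^N`,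
`M ≤ p·M + (1-p)·B ≤ B`. -/
theorem hrs_outage_between (N : ℕ) (hN : 1 ≤ N) (x : ℝ) (hx : 0 < x)
    (p : ℝ) (hp0 : 0 ≤ p) (hp1 : p ≤ 1) :
    1 - (1 - (1 - Real.exp (-x)) ^ N) ^ 2
        ≤ p * (1 - (1 - (1 - Real.exp (-x)) ^ N) ^ 2)
            + (1 - p) * (1 - Real.exp (-(2 * x))) ^ N ∧
      p * (1 - (1 - (1 - Real.exp (-x)) ^ N) ^ 2)
            + (1 - p) * (1 - Real.exp (-(2 * x))) ^ N
        ≤ (1 - Real.exp (-(2 * x))) ^ N := by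
  set e := Real.exp (-x) with he
  have he0 : 0 < e := Real.exp_pos _
  have he1 : e < 1 := by
    rw [he, Real.exp_lt_one_iff]; linarith
  have hB : Real.exp (-(2 * x)) = e ^ 2 := by
    rw [he, show -(2 * x) = -x + -x by ring, Real.exp_add]; ring
  rw [hB]
  have h1 : 1 + (N : ℝ) * (-e) ≤ (1 + (-e)) ^ N :=
    one_add_mul_le_pow (by linarith) N
  have h2 : 1 + (N : ℝ) * e ≤ (1 + e) ^ N :=
    one_add_mul_le_pow (by linarith) N
  have hkey : 2 - (1 - e) ^ N ≤ (1 + e) ^ N := by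
    have : (1 + (-e)) = 1 - e := by ring
    rw [this] at h1; linarith
  have hpow : (0 : ℝ) ≤ (1 - e) ^ N := pow_nonneg (by linarith) N
  have hprod : (1 - e ^ 2) ^ N = (1 - e) ^ N * (1 + e) ^ N := by
    rw [← mul_pow]; ring_nf
  have hMB : 1 - (1 - (1 - e) ^ N) ^ 2 ≤ (1 - e ^ 2) ^ N := by
    have := mul_le_mul_of_nonneg_left hkey hpow
    nlinarith [this, hprod]
  constructor
  · nlinarith [mul_nonneg (by linarith : (0:ℝ) ≤ 1 - p) (by linarith : (0:ℝ) ≤ (1 - e ^ 2) ^ N - (1 - (1 - (1 - e) ^ N) ^ 2))]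
  · nlinarith [mul_nonneg hp0 (by linarith : (0:ℝ) ≤ (1 - e ^ 2) ^ N - (1 - (1 - (1 - e) ^ N) ^ 2))]
end

section
/- Fix an integer N ≥ 1 and a threshold γ > 0, and define P_out^MMRS(γ̄) = 1 − [1 − (1 − exp(−γ/γ̄))^N]^2 for γ̄ > 0. Then lim_{γ̄ → ∞} ln P_out^MMRS(γ̄) / ln γ̄ = −N; that is, max-max relay selection achieves diversity order N. -/
open Filter Real

lemma phi_lim : Tendsto (fun x : ℝ => (1 - Real.exp (-x)) / x)
    (nhdsWithin 0 {0}ᶜ) (nhds 1) := by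
  have h : HasDerivAt (fun x : ℝ => Real.exp (-x)) (-1) 0 := by
    simpa [Function.comp_def] using (Real.hasDerivAt_exp (-(0:ℝ))).comp 0 (hasDerivAt_neg (0:ℝ))
  have h1 := hasDerivAt_iff_tendsto_slope.mp h
  have h2 := h1.neg
  rw [show -(-1 : ℝ) = 1 from by ring] at h2
  refine h2.congr (fun x => ?_)
  simp [slope_fun_def, Real.exp_zero]
  ring

/-- MMRS achieves diversity order `N`:
`ln P_out^MMRS(γ̄) / ln γ̄ → -N` as `γ̄ → ∞`, where
`P_out^MMRS(γ̄) = 1 - (1 - (1 - exp(-γ/γ̄))^N)^2`. -/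
theorem mmrs_diversity_order (N : ℕ) (hN : 1 ≤ N) (γ : ℝ) (hγ : 0 < γ) :
    Tendsto (fun γbar : ℝ =>
        Real.log (1 - (1 - (1 - Real.exp (-(γ / γbar))) ^ N) ^ 2) / Real.log γbar)
      atTop (nhds (-(N : ℝ))) := by
  have hL : Tendsto Real.log atTop atTop := Real.tendsto_log_atTop
  have hx00 : Tendsto (fun b : ℝ => γ / b) atTop (nhds 0) :=
    tendsto_const_nhds.div_atTop tendsto_id
  have hx0 : Tendsto (fun b : ℝ => γ / b) atTop (nhdsWithin 0 {0}ᶜ) := by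
    rw [tendsto_nhdsWithin_iff]
    refine ⟨hx00, ?_⟩
    filter_upwards [eventually_gt_atTop 0] with b hb
    exact (div_pos hγ hb).ne'
  have hr : Tendsto (fun b => (1 - Real.exp (-(γ / b))) / (γ / b)) atTop (nhds 1) :=
    phi_lim.comp hx0
  have hlogr : Tendsto (fun b => Real.log ((1 - Real.exp (-(γ / b))) / (γ / b)))
      atTop (nhds 0) := by
    have := (Real.continuousAt_log one_ne_zero).tendsto.comp hr
    simpa [Function.comp_def] using this
  have h1 : Tendsto (fun b => Real.log γ / Real.log b) atTop (nhds 0) :=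
    tendsto_const_nhds.div_atTop hL
  have h2 : Tendsto (fun b =>
      Real.log ((1 - Real.exp (-(γ / b))) / (γ / b)) / Real.log b) atTop (nhds 0) :=
    hlogr.div_atTop hL
  have hu : Tendsto (fun b => 1 - Real.exp (-(γ / b))) atTop (nhds 0) := by
    have he : Tendsto (fun b : ℝ => Real.exp (-(γ / b))) atTop (nhds 1) := by
      have := (Real.continuous_exp.tendsto (-0)).comp hx00.neg
      simpa [Function.comp_def] using this
    have := (tendsto_const_nhds (x := (1:ℝ))).sub he
    simpa using this
  have hupow : Tendsto (fun b => (1 - Real.exp (-(γ / b))) ^ N) atTop (nhds 0) := by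
    have := hu.pow N
    simpa [zero_pow (by omega : N ≠ 0)] using this
  have h2sub : Tendsto (fun b => 2 - (1 - Real.exp (-(γ / b))) ^ N) atTop (nhds 2) := by
    have := (tendsto_const_nhds (x := (2:ℝ))).sub hupow
    simpa using this
  have h3 : Tendsto (fun b =>
      Real.log (2 - (1 - Real.exp (-(γ / b))) ^ N) / Real.log b) atTop (nhds 0) := by
    have hl2 : Tendsto (fun b =>
        Real.log (2 - (1 - Real.exp (-(γ / b))) ^ N)) atTop (nhds (Real.log 2)) :=
      (Real.continuousAt_log two_ne_zero).tendsto.comp h2sub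
    exact hl2.div_atTop hL
  -- combined limit
  have key : Tendsto (fun b =>
      (N : ℝ) * (Real.log γ / Real.log b - 1 +
        Real.log ((1 - Real.exp (-(γ / b))) / (γ / b)) / Real.log b) +
      Real.log (2 - (1 - Real.exp (-(γ / b))) ^ N) / Real.log b)
      atTop (nhds (-(N : ℝ))) := by
    have := (((h1.sub (tendsto_const_nhds (x := (1:ℝ)))).add h2).const_mul (N : ℝ)).add h3
    simpa using this
  refine key.congr' ?_
  filter_upwards [eventually_gt_atTop 1] with b hb
  have hb0 : (0:ℝ) < b := lt_trans one_pos hb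
  have hlb : Real.log b ≠ 0 := (Real.log_pos hb).ne'
  set x := γ / b with hxdef
  have hx : 0 < x := div_pos hγ hb0
  set u := 1 - Real.exp (-x) with hudef
  have hu0 : 0 < u := by
    have : Real.exp (-x) < 1 := Real.exp_lt_one_iff.mpr (by linarith)
    simp [hudef]; linarith
  have hu1 : u < 1 := by
    have : 0 < Real.exp (-x) := Real.exp_pos _
    simp [hudef]; linarith
  have hupow1 : u ^ N < 1 := pow_lt_one₀ hu0.le hu1 (by omega)
  have hupow0 : 0 < u ^ N := pow_pos hu0 N
  have h2nz : (2 : ℝ) - u ^ N ≠ 0 := by linarith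
  have harg : 1 - (1 - u ^ N) ^ 2 = u ^ N * (2 - u ^ N) := by ring
  rw [harg, Real.log_mul (pow_ne_zero N hu0.ne') h2nz, Real.log_pow,
    Real.log_div hu0.ne' hx.ne', hxdef, Real.log_div hγ.ne' hb0.ne']
  field_simp
  ring
end

section
/- Fix an integer N ≥ 1 and a threshold γ > 0, and define P_out^BRS(γ̄) = (1 − exp(−2γ/γ̄))^N for γ̄ > 0. Then lim_{γ̄ → ∞} ln P_out^BRS(γ̄) / ln γ̄ = −N; that is, best relay selection achieves diversity order N. -/
open Filter Real

lemma slope_one_sub_exp_neg :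
    Tendsto (fun t : ℝ => (1 - Real.exp (-t)) / t)
      (nhdsWithin 0 (Set.Ioi 0)) (nhds 1) := by
  have hd : HasDerivAt (fun t : ℝ => 1 - Real.exp (-t)) 1 0 := by
    have h := (((Real.hasDerivAt_exp (-0)).comp 0 (hasDerivAt_neg 0))).const_sub 1
    simpa using h
  have h1 := hasDerivAt_iff_tendsto_slope.mp hd
  have h2 : Tendsto (slope (fun t : ℝ => 1 - Real.exp (-t)) 0)
      (nhdsWithin 0 (Set.Ioi 0)) (nhds 1) :=
    h1.mono_left (nhdsWithin_mono 0 (by intro x hx; exact ne_of_gt hx))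
  refine h2.congr (fun t => ?_)
  simp [slope_def_field, div_eq_mul_inv, mul_comm]

/-- BRS achieves diversity order `N`:
`ln P_out^BRS(γ̄) / ln γ̄ → -N` as `γ̄ → ∞`, where
`P_out^BRS(γ̄) = (1 - exp(-2γ/γ̄))^N`. -/
theorem brs_diversity_order (N : ℕ) (hN : 1 ≤ N) (γ : ℝ) (hγ : 0 < γ) :
    Tendsto (fun γbar : ℝ =>
        Real.log ((1 - Real.exp (-(2 * γ / γbar))) ^ N) / Real.log γbar)
      atTop (nhds (-(N : ℝ))) := by
  -- u γbar := 2γ/γbar → 0 within Ioi 0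
  have hu : Tendsto (fun γbar : ℝ => 2 * γ / γbar) atTop
      (nhdsWithin 0 (Set.Ioi 0)) := by
    rw [tendsto_nhdsWithin_iff]
    constructor
    · simpa [div_eq_mul_inv] using tendsto_inv_atTop_zero.const_mul (2 * γ)
    · filter_upwards [eventually_gt_atTop (0 : ℝ)] with x hx
      exact div_pos (by linarith) hx
  -- ratio g γbar := (1 - exp(-u))/u → 1, hence log g → 0
  have hg : Tendsto (fun γbar : ℝ =>
      (1 - Real.exp (-(2 * γ / γbar))) / (2 * γ / γbar)) atTop (nhds 1) :=
    slope_one_sub_exp_neg.comp hu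
  have hlogg : Tendsto (fun γbar : ℝ =>
      Real.log ((1 - Real.exp (-(2 * γ / γbar))) / (2 * γ / γbar))) atTop
      (nhds 0) := by
    have := (Real.continuousAt_log (by norm_num : (1:ℝ) ≠ 0)).tendsto.comp hg
    simpa [Function.comp_def] using this
  -- 1/log γbar → 0
  have hinv : Tendsto (fun γbar : ℝ => (Real.log γbar)⁻¹) atTop (nhds 0) :=
    Real.tendsto_log_atTop.inv_tendsto_atTop
  -- assemble
  have key : Tendsto (fun γbar : ℝ =>
      Real.log (1 - Real.exp (-(2 * γ / γbar))) / Real.log γbar) atTop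
      (nhds (-1)) := by
    have hmain : Tendsto (fun γbar : ℝ =>
        (Real.log ((1 - Real.exp (-(2 * γ / γbar))) / (2 * γ / γbar))
          + Real.log (2 * γ)) * (Real.log γbar)⁻¹ - 1) atTop (nhds (-1)) := by
      have := ((hlogg.add_const (Real.log (2 * γ))).mul hinv).sub_const 1
      simpa using this
    refine hmain.congr' ?_
    filter_upwards [eventually_gt_atTop (1 : ℝ)] with x hx
    have hx0 : 0 < x := by linarith
    have hu0 : 0 < 2 * γ / x := div_pos (by linarith) hx0
    have hlt : Real.exp (-(2 * γ / x)) < 1 := by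
      rw [Real.exp_lt_one_iff]; linarith
    have h1e : 0 < 1 - Real.exp (-(2 * γ / x)) := by linarith
    have hlogx : Real.log x ≠ 0 := by
      have := Real.log_pos hx
      linarith
    rw [Real.log_div (ne_of_gt h1e) (ne_of_gt hu0),
      Real.log_div (by positivity) (ne_of_gt hx0)]
    field_simp
    ring
  have : Tendsto (fun γbar : ℝ =>
      (N : ℝ) * (Real.log (1 - Real.exp (-(2 * γ / γbar))) / Real.log γbar))
      atTop (nhds ((N : ℝ) * (-1))) := key.const_mul _
  simp only [mul_neg, mul_one] at this
  refine this.congr (fun x => ?_)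
  rw [Real.log_pow]
  ring
end
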